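/- arXiv:2005.05108 — 5 statements merged into one kernel-verified Lean document; each statement's English description precedes it below -/
import Mathlib

section
/- Let G and H be groupoids and let d₀ : G → H be a functor satisfying the path-lifting property: for every object x of G and every isomorphism β : d₀(x) ≅ b in H, there exists an isomorphism φ : x ≅ x' in G with d₀(φ) = β (after identifying d₀(x') = b). Then for any functor q : K → H from a groupoid K, the strict pullback groupoid {(x,y) : d₀ x = q y} is equivalent to the comma (homotopy) pullback groupoid whose objects are triples (x, y, σ : d₀ x ≅ q y). -/
/-!
Every object `(x, y, σ : d₀ x ≅ q y)` of the comma category is isomorphic to a strict one: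
lifting `σ` along `d₀` to `φ : x ≅ x'` gives the isomorphism `(φ, 𝟙 y) : (x, y, σ) ≅ (x', y, 𝟙)`.
The inclusion of a full subcategory is fully faithful, so it is an equivalence.
-/

open CategoryTheory

namespace CategoryTheory.Comma

variable {G H K : Type*} [Category G] [Category K]

section

variable [Category H] {d₀ : G ⥤ H} {q : K ⥤ H}

variable (d₀ q) in
abbrev strictPullback : ObjectProperty (Comma d₀ q) :=
  fun o => ∃ h : d₀.obj o.left = q.obj o.right, o.hom = eqToHom h

def isoStrictOfLift (o : Comma d₀ q) {x' : G} (φ : o.left ≅ x') (h : d₀.obj x' = q.obj o.right)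
    (hφ : d₀.map φ.hom = o.hom ≫ eqToHom h.symm) : o ≅ ⟨x', o.right, eqToHom h⟩ :=
  isoMk φ (Iso.refl _) (by simp [hφ])

end

theorem essSurj_ι_strictPullback [Groupoid H] {d₀ : G ⥤ H} {q : K ⥤ H}
    (hfib : ∀ (x : G) (b : H) (β : d₀.obj x ≅ b),
      ∃ (x' : G) (φ : x ≅ x') (h : d₀.obj x' = b), d₀.map φ.hom = β.hom ≫ eqToHom h.symm) :
    (strictPullback d₀ q).ι.EssSurj where
  mem_essImage o := by
    obtain ⟨x', φ, h, hφ⟩ := hfib o.left (q.obj o.right) (asIso o.hom)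
    exact ⟨⟨_, h, rfl⟩, ⟨(isoStrictOfLift o φ h hφ).symm⟩⟩

end CategoryTheory.Comma

/-- If `d₀ : G ⥤ H` is a fibration of groupoids (path-lifting property), then for any
functor `q : K ⥤ H` of groupoids, the strict pullback (realized as the full subcategory
of the comma category on objects whose comparison isomorphism is an identity `eqToHom`)
is equivalent to the comma (homotopy) pullback: the inclusion is an equivalence. -/
theorem strictPullback_equiv_homotopyPullback_of_fibration
    {G H K : Type} [Groupoid G] [Groupoid H] [Groupoid K]
    (d₀ : G ⥤ H) (q : K ⥤ H)
    (hfib : ∀ (x : G) (b : H) (β : d₀.obj x ≅ b),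
      ∃ (x' : G) (φ : x ≅ x') (h : d₀.obj x' = b),
        d₀.map φ.hom = β.hom ≫ eqToHom h.symm) :
    (ObjectProperty.ι
      (fun o : Comma d₀ q => ∃ h : d₀.obj o.left = q.obj o.right, o.hom = eqToHom h)).IsEquivalence := by
  have : (Comma.strictPullback d₀ q).ι.EssSurj := Comma.essSurj_ι_strictPullback hfib
  exact { }
end

section
/- Let H be a well-founded forward hypergraph with node set N and order relation ≤ (the reflexive-transitive closure of the immediate-precedence relation), whose in-boundary is a finite set B. Then there is a bijection between lowersets L ⊆ N of the poset (N, ≤) and open sub-B-hypergraphs G ⊆ H whose in-boundary is again B: the bijection sends a sub-hypergraph to its set of nodes, and a lowerset L to the sub-hypergraph consisting of the nodes in L, all hyperedges incident to some node of L, and all hyperedges of B. -/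
/-- A (directed) hypergraph: a diagram of sets `A ← I → N ← O → A` in which both
spans are relations and the maps `I → N ← O` have finite fibres. -/
structure DirHypergraph where
  A : Type
  I : Type
  N : Type
  O : Type
  iA : I → A
  iN : I → N
  oN : O → N
  oA : O → A
  rel_in : Function.Injective (fun i => (iA i, iN i))
  rel_out : Function.Injective (fun o => (oN o, oA o))
  fin_in : ∀ x : N, Set.Finite {i | iN i = x}
  fin_out : ∀ x : N, Set.Finite {o | oN o = x}

/-- Forward hypergraph: every hyperedge is outgoing of at most one node. -/
def DirHypergraph.Forward (H : DirHypergraph) : Prop := Function.Injective H.oA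

/-- Immediate precedence `x ⋖ y`: some hyperedge is outgoing of `x` and incoming to `y`. -/
def DirHypergraph.prec (H : DirHypergraph) (x y : H.N) : Prop :=
  ∃ (o : H.O) (i : H.I), H.oN o = x ∧ H.iN i = y ∧ H.oA o = H.iA i

/-- The reflexive-transitive closure `≤` of `⋖`. -/
def DirHypergraph.le (H : DirHypergraph) : H.N → H.N → Prop :=
  Relation.ReflTransGen H.prec

/-- Well-founded: the strict order `<` is irreflexive (no directed cycles) and
every principal lowerset `{x : x ≤ y}` is finite. -/
def DirHypergraph.WellFoundedHgr (H : DirHypergraph) : Prop :=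
  (∀ x : H.N, ¬ Relation.TransGen H.prec x x) ∧ ∀ y : H.N, Set.Finite {x | H.le x y}

/-- The in-boundary: hyperedges not outgoing of any node. -/
def DirHypergraph.inBoundary (H : DirHypergraph) : Set H.A := {a | a ∉ Set.range H.oA}

/-- An open sub-`B`-hypergraph of `H`: componentwise subsets, closed under the
structure maps, etale over the nodes (the `I`- and `O`-subsets are the full
preimages of the node subset), and with in-boundary equal to the in-boundary
`B` of `H`. -/
structure OpenSubB (H : DirHypergraph) where
  SA : Set H.A
  SI : Set H.I
  SN : Set H.N
  SO : Set H.O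
  etale_in : SI = H.iN ⁻¹' SN
  etale_out : SO = H.oN ⁻¹' SN
  closed_iA : ∀ i ∈ SI, H.iA i ∈ SA
  closed_oA : ∀ o ∈ SO, H.oA o ∈ SA
  bd : SA \ (H.oA '' SO) = H.inBoundary

/-!
An open sub-`B`-hypergraph is determined by its nodes: its incidences are the preimages
of its nodes, and its hyperedges are `B` together with the outputs of its nodes. Its
nodes form a lowerset because a hyperedge entering one of them is not in `B`, hence is
the output of some node of the sub-hypergraph, which by forwardness is the only node it
comes out of. Conversely, the hyperedges entering a lowerset `L` lie in `B` or come out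
of nodes below `L`, so `L` spans such a sub-hypergraph.
-/

namespace DirHypergraph

def IsLowerSet (H : DirHypergraph) (L : Set H.N) : Prop :=
  ∀ ⦃x y : H.N⦄, H.le x y → y ∈ L → x ∈ L

variable {H : DirHypergraph}

lemma oA_notMem_inBoundary {o : H.O} : H.oA o ∉ H.inBoundary :=
  fun h => h ⟨o, rfl⟩

def subOfLowerSet (L : Set H.N) (hL : H.IsLowerSet L) : OpenSubB H where
  SA := H.oA '' (H.oN ⁻¹' L) ∪ H.inBoundary
  SI := H.iN ⁻¹' L
  SN := L
  SO := H.oN ⁻¹' L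
  etale_in := rfl
  etale_out := rfl
  closed_iA i hi := by
    by_cases h : H.iA i ∈ Set.range H.oA
    · obtain ⟨o, ho⟩ := h
      exact Or.inl ⟨o, hL (.single ⟨o, i, rfl, rfl, ho⟩) hi, ho⟩
    · exact Or.inr h
  closed_oA o ho := Or.inl ⟨o, ho, rfl⟩
  bd := by
    rw [Set.union_sdiff_left, sdiff_eq_left, Set.disjoint_left]
    rintro _ hB ⟨o, -, rfl⟩
    exact oA_notMem_inBoundary hB

end DirHypergraph

namespace OpenSubB

open DirHypergraph

variable {H : DirHypergraph}

lemma SA_eq_image_union_inBoundary (G : OpenSubB H) :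
    G.SA = H.oA '' G.SO ∪ H.inBoundary := by
  rw [← G.bd, Set.union_sdiff_self, Set.union_eq_right.mpr]
  rintro _ ⟨o, ho, rfl⟩
  exact G.closed_oA o ho

lemma ext_of_SN_eq {G G' : OpenSubB H} (h : G.SN = G'.SN) : G = G' := by
  have hA := G.SA_eq_image_union_inBoundary
  have hA' := G'.SA_eq_image_union_inBoundary
  cases G; cases G'
  dsimp only at *
  subst_vars
  rfl

lemma mem_SN_of_prec (hfwd : H.Forward) (G : OpenSubB H) {x y : H.N} (hxy : H.prec x y)
    (hy : y ∈ G.SN) : x ∈ G.SN := by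
  obtain ⟨o, i, rfl, rfl, hoi⟩ := hxy
  have hA : H.oA o ∈ H.oA '' G.SO ∪ H.inBoundary := by
    rw [← G.SA_eq_image_union_inBoundary, hoi]
    exact G.closed_iA i (G.etale_in ▸ hy)
  obtain ⟨o', ho', heq⟩ := hA.resolve_right oA_notMem_inBoundary
  rw [← hfwd heq, ← Set.mem_preimage, ← G.etale_out]
  exact ho'

lemma isLowerSet_SN (hfwd : H.Forward) (G : OpenSubB H) : H.IsLowerSet G.SN := by
  intro x y hxy hy
  induction hxy using Relation.ReflTransGen.head_induction_on with
  | refl => exact hy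
  | head hstep _ ih => exact G.mem_SN_of_prec hfwd hstep ih

end OpenSubB

theorem lowersets_equiv_subBhypergraphs_general (H : DirHypergraph)
    (hfwd : H.Forward) :
    ∃ e : {L : Set H.N // ∀ ⦃x y : H.N⦄, H.le x y → y ∈ L → x ∈ L} ≃ OpenSubB H,
      ∀ L, (e L).SN = L.1 :=
  ⟨{ toFun := fun L => H.subOfLowerSet L.1 L.2
     invFun := fun G => ⟨G.SN, G.isLowerSet_SN hfwd⟩
     left_inv := fun _ => rfl
     right_inv := fun _ => OpenSubB.ext_of_SN_eq rfl }, fun _ => rfl⟩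

/-- For a well-founded forward hypergraph `H` with finite in-boundary `B`, the
lowersets of the node poset `(N, ≤)` are in bijection with the open
sub-`B`-hypergraphs of `H`, the bijection being given by taking the node set. -/
theorem lowersets_equiv_subBhypergraphs (H : DirHypergraph)
    (hfwd : H.Forward) (hwf : H.WellFoundedHgr) (hBfin : H.inBoundary.Finite) :
    ∃ e : {L : Set H.N // ∀ ⦃x y : H.N⦄, H.le x y → y ∈ L → x ∈ L} ≃ OpenSubB H,
      ∀ L, (e L).SN = L.1 :=
  lowersets_equiv_subBhypergraphs_general H hfwd
end

section
/- Let P be a grounded Petri net (every transition has nonempty pre-set) and fix an initial marking given by a finite set B. Then every morphism of B-P-processes is injective. Concretely: if G and H are finite acyclic graphs equipped with etale maps to P whose in-boundaries are identified with B, and f : G → H is an etale map of graphs over P restricting to the identity on B, then f is injective on nodes and on edges. -/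
/-- A whole-grain Petri net: a diagram of finite sets `S ← I → T ← O → S`. -/
structure PetriNet where
  S : Type
  I : Type
  T : Type
  O : Type
  [finS : Finite S]
  [finI : Finite I]
  [finT : Finite T]
  [finO : Finite O]
  sI : I → S
  tI : I → T
  tO : O → T
  sO : O → S

/-- A graph (AINOA style): a diagram of finite sets `A ← A_N → N ← _N A → A`
with the outer maps injective. -/
structure PNGraph where
  A : Type
  AN : Type
  N : Type
  NA : Type
  [finA : Finite A]
  [finAN : Finite AN]
  [finN : Finite N]
  [finNA : Finite NA]
  srcEdge : AN → A
  srcNode : AN → N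
  tgtNode : NA → N
  tgtEdge : NA → A
  inj_srcEdge : Function.Injective srcEdge
  inj_tgtEdge : Function.Injective tgtEdge

/-- `x ⋖ y`: there is an inner edge from node `x` to node `y`. -/
def PNGraph.prec (G : PNGraph) (x y : G.N) : Prop :=
  ∃ (o : G.NA) (i : G.AN), G.tgtNode o = x ∧ G.srcNode i = y ∧ G.tgtEdge o = G.srcEdge i

/-- Acyclicity: no directed cycles. -/
def PNGraph.Acyclic (G : PNGraph) : Prop := ∀ x : G.N, ¬ Relation.TransGen G.prec x x

/-- In-boundary: edges not outgoing of any node. -/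
def PNGraph.inBoundary (G : PNGraph) : Set G.A := {a | a ∉ Set.range G.tgtEdge}

/-- Out-boundary: edges not incoming to any node. -/
def PNGraph.outBoundary (G : PNGraph) : Set G.A := {a | a ∉ Set.range G.srcEdge}

/-- An etale map from a graph `G` to a Petri net `P`: componentwise maps with the
two middle squares pullbacks. -/
structure EtaleMap (G : PNGraph) (P : PetriNet) where
  mapA : G.A → P.S
  mapI : G.AN → P.I
  mapN : G.N → P.T
  mapO : G.NA → P.O
  comm_sI : ∀ m, P.sI (mapI m) = mapA (G.srcEdge m)
  comm_tI : ∀ m, P.tI (mapI m) = mapN (G.srcNode m)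
  comm_tO : ∀ o, P.tO (mapO o) = mapN (G.tgtNode o)
  comm_sO : ∀ o, P.sO (mapO o) = mapA (G.tgtEdge o)
  etale_in : ∀ (x : G.N) (i : P.I), P.tI i = mapN x →
      ∃! m : G.AN, G.srcNode m = x ∧ mapI m = i
  etale_out : ∀ (x : G.N) (o : P.O), P.tO o = mapN x →
      ∃! m : G.NA, G.tgtNode m = x ∧ mapO m = o

/-- An etale map of graphs: componentwise maps with the two middle squares pullbacks. -/
structure GraphMap (G H : PNGraph) where
  mapA : G.A → H.A
  mapAN : G.AN → H.AN
  mapN : G.N → H.N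
  mapNA : G.NA → H.NA
  comm_srcEdge : ∀ m, H.srcEdge (mapAN m) = mapA (G.srcEdge m)
  comm_srcNode : ∀ m, H.srcNode (mapAN m) = mapN (G.srcNode m)
  comm_tgtNode : ∀ o, H.tgtNode (mapNA o) = mapN (G.tgtNode o)
  comm_tgtEdge : ∀ o, H.tgtEdge (mapNA o) = mapA (G.tgtEdge o)
  etale_in : ∀ (x : G.N) (m' : H.AN), H.srcNode m' = mapN x →
      ∃! m : G.AN, G.srcNode m = x ∧ mapAN m = m'
  etale_out : ∀ (x : G.N) (o' : H.NA), H.tgtNode o' = mapN x →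
      ∃! o : G.NA, G.tgtNode o = x ∧ mapNA o = o'

/-- `f : G → H` is a map over `P` with respect to etale maps `p : G → P`, `q : H → P`. -/
def GraphMap.OverP {G H : PNGraph} {P : PetriNet} (f : GraphMap G H)
    (p : EtaleMap G P) (q : EtaleMap H P) : Prop :=
  (∀ a, q.mapA (f.mapA a) = p.mapA a) ∧
  (∀ m, q.mapI (f.mapAN m) = p.mapI m) ∧
  (∀ x, q.mapN (f.mapN x) = p.mapN x) ∧
  (∀ o, q.mapO (f.mapNA o) = p.mapO o)


/-!
Induction along the (well-founded) causal order of `G`. Since `P` is grounded and `q` is etale,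
every node of `H` has an input edge, and by etaleness of `f` it lifts to input edges `m, m'` of any
two nodes `x, x'` with `f x = f x'`. The edges `srcEdge m` and `srcEdge m'` have the same image:
if they lie on the in-boundary they are equal because `f` is the identity on `B`; otherwise they
are outputs of nodes strictly before `x`, which coincide by induction, and etaleness of `f` at that
node identifies the edges. Hence `m = m'` and `x = x'`. Injectivity on edges follows the same way.
-/

namespace PNGraph

theorem Acyclic.wellFounded_prec {G : PNGraph} (hG : G.Acyclic) : WellFounded G.prec := by
  have := G.finN
  have : Std.Irrefl (Relation.TransGen G.prec) := ⟨hG⟩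
  exact Subrelation.wf Relation.TransGen.single (Finite.wellFounded_of_trans_of_irrefl _)

theorem notMem_inBoundary_iff {G : PNGraph} {a : G.A} :
    a ∉ G.inBoundary ↔ ∃ o, G.tgtEdge o = a := by
  simp [inBoundary]

theorem tgtEdge_notMem_inBoundary (G : PNGraph) (o : G.NA) : G.tgtEdge o ∉ G.inBoundary :=
  notMem_inBoundary_iff.2 ⟨o, rfl⟩

end PNGraph

theorem EtaleMap.exists_srcNode_eq {H : PNGraph} {P : PetriNet} (q : EtaleMap H P)
    (hground : Function.Surjective P.tI) (y : H.N) : ∃ m, H.srcNode m = y := by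
  obtain ⟨i, hi⟩ := hground (q.mapN y)
  obtain ⟨m, ⟨hm, -⟩, -⟩ := q.etale_in y i hi
  exact ⟨m, hm⟩

namespace GraphMap

variable {G H : PNGraph} (f : GraphMap G H)

theorem eq_of_tgtNode_eq_of_mapNA_eq {o o' : G.NA} (hx : G.tgtNode o = G.tgtNode o')
    (h : f.mapNA o = f.mapNA o') : o = o' := by
  obtain ⟨_, -, huniq⟩ := f.etale_out (G.tgtNode o) (f.mapNA o) (f.comm_tgtNode o)
  exact (huniq o ⟨rfl, rfl⟩).trans (huniq o' ⟨hx.symm, h.symm⟩).symm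

section InBoundary

variable {B : Type} {βG : B ≃ G.inBoundary} {βH : B ≃ H.inBoundary}

theorem mapA_mem_inBoundary_iff (hB : ∀ b : B, f.mapA (βG b).1 = (βH b).1) {a : G.A} :
    f.mapA a ∈ H.inBoundary ↔ a ∈ G.inBoundary := by
  refine ⟨fun hfa => ?_, fun ha => ?_⟩
  · by_contra ha
    obtain ⟨o, rfl⟩ := PNGraph.notMem_inBoundary_iff.1 ha
    exact H.tgtEdge_notMem_inBoundary (f.mapNA o) (f.comm_tgtEdge o ▸ hfa)
  · have h := hB (βG.symm ⟨a, ha⟩)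
    rw [Equiv.apply_symm_apply] at h
    exact h ▸ (βH _).2

theorem injOn_mapA_inBoundary (hB : ∀ b : B, f.mapA (βG b).1 = (βH b).1) :
    Set.InjOn f.mapA G.inBoundary := by
  intro a ha a' ha' h
  have hb := hB (βG.symm ⟨a, ha⟩)
  have hb' := hB (βG.symm ⟨a', ha'⟩)
  rw [Equiv.apply_symm_apply] at hb hb'
  have : βG.symm ⟨a, ha⟩ = βG.symm ⟨a', ha'⟩ :=
    βH.injective (Subtype.ext (by rw [← hb, ← hb', h]))
  simpa using this

theorem eq_of_mapA_eq (hB : ∀ b : B, f.mapA (βG b).1 = (βH b).1) {a a' : G.A}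
    (h : f.mapA a = f.mapA a')
    (hnode : ∀ o, G.tgtEdge o = a →
      ∀ x', f.mapN (G.tgtNode o) = f.mapN x' → G.tgtNode o = x') :
    a = a' := by
  have hbd : a ∈ G.inBoundary ↔ a' ∈ G.inBoundary := by
    rw [← f.mapA_mem_inBoundary_iff hB, h, f.mapA_mem_inBoundary_iff hB]
  by_cases ha : a ∈ G.inBoundary
  · exact f.injOn_mapA_inBoundary hB ha (hbd.1 ha) h
  obtain ⟨o, rfl⟩ := PNGraph.notMem_inBoundary_iff.1 ha
  obtain ⟨o', rfl⟩ := PNGraph.notMem_inBoundary_iff.1 (hbd.not.1 ha)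
  have hmap : f.mapNA o = f.mapNA o' := H.inj_tgtEdge (by rw [f.comm_tgtEdge, f.comm_tgtEdge, h])
  have hx : G.tgtNode o = G.tgtNode o' :=
    hnode o rfl _ (by rw [← f.comm_tgtNode, ← f.comm_tgtNode, hmap])
  rw [f.eq_of_tgtNode_eq_of_mapNA_eq hx hmap]

theorem mapN_injective (hB : ∀ b : B, f.mapA (βG b).1 = (βH b).1) (hG : G.Acyclic)
    (hin : ∀ y, ∃ m, H.srcNode m = y) : Function.Injective f.mapN := by
  intro x
  induction x using hG.wellFounded_prec.induction with
  | _ x ih =>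
  intro x' hx
  obtain ⟨m', hm'⟩ := hin (f.mapN x)
  obtain ⟨m, ⟨rfl, hm⟩, -⟩ := f.etale_in x m' hm'
  obtain ⟨m₁, ⟨rfl, hm₁⟩, -⟩ := f.etale_in x' m' (hm'.trans hx)
  have hsrc : G.srcEdge m = G.srcEdge m₁ :=
    f.eq_of_mapA_eq hB (by rw [← f.comm_srcEdge, ← f.comm_srcEdge, hm, hm₁])
      fun o ho => ih _ ⟨o, m, rfl, rfl, ho⟩
  rw [G.inj_srcEdge hsrc]

end InBoundary

end GraphMap

theorem morphism_of_BPprocesses_injective_general (P : PetriNet)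
    (hground : Function.Surjective P.tI)
    (B : Type)
    (G H : PNGraph) (hG : G.Acyclic)
    (q : EtaleMap H P)
    (βG : B ≃ {a : G.A // a ∈ G.inBoundary})
    (βH : B ≃ {a : H.A // a ∈ H.inBoundary})
    (f : GraphMap G H)
    (hB : ∀ b : B, f.mapA (βG b).1 = (βH b).1) :
    Function.Injective f.mapN ∧ Function.Injective f.mapA := by
  have hN : Function.Injective f.mapN := f.mapN_injective hB hG (q.exists_srcNode_eq hground)
  exact ⟨hN, fun _ _ h => f.eq_of_mapA_eq hB h fun _ _ _ => @hN _ _⟩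

/-- For a grounded Petri net `P` (every transition has nonempty pre-set) with
initial marking `B`, every morphism of `B`-`P`-processes is injective (on nodes
and on edges). -/
theorem morphism_of_BPprocesses_injective (P : PetriNet)
    (hground : Function.Surjective P.tI)
    (B : Type) [Finite B]
    (G H : PNGraph) (hG : G.Acyclic) (hH : H.Acyclic)
    (p : EtaleMap G P) (q : EtaleMap H P)
    (βG : B ≃ {a : G.A // a ∈ G.inBoundary})
    (βH : B ≃ {a : H.A // a ∈ H.inBoundary})
    (f : GraphMap G H) (hover : f.OverP p q)
    (hB : ∀ b : B, f.mapA (βG b).1 = (βH b).1) :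
    Function.Injective f.mapN ∧ Function.Injective f.mapA :=
  morphism_of_BPprocesses_injective_general P hground B G H hG q βG βH f hB
end

section
/- Let P be a Petri net and let f : G ≅ G be an automorphism of a P-graph (an acyclic graph with an etale map p to P, with p ∘ f = p). If f fixes some node x, then f is the identity on the whole connected component of x (all nodes and edges connected to x). -/
/-- Edge `a` is incident to node `x`. -/
def PNGraph.incident (G : PNGraph) (a : G.A) (x : G.N) : Prop :=
  (∃ m : G.AN, G.srcEdge m = a ∧ G.srcNode m = x) ∨
  (∃ o : G.NA, G.tgtEdge o = a ∧ G.tgtNode o = x)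

/-- Two nodes are adjacent if they share an incident edge. -/
def PNGraph.adj (G : PNGraph) (x y : G.N) : Prop :=
  ∃ a : G.A, G.incident a x ∧ G.incident a y

/-! The etale condition makes a node's incident edge ends faithful over `P`: an end at a node is
determined by its image in `P`. An automorphism over `P` fixing a node therefore fixes every end
at it, hence every incident edge; by injectivity of the outer maps, fixing an edge fixes every
node it touches. Fixed nodes thus propagate along adjacency to the whole component. -/

theorem PNGraph.adj_symm (G : PNGraph) {y z : G.N} (h : G.adj y z) : G.adj z y :=
  let ⟨a, hy, hz⟩ := h
  ⟨a, hz, hy⟩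

namespace EtaleMap

variable {G : PNGraph} {P : PetriNet} (p : EtaleMap G P)

theorem eq_of_srcNode_eq_of_mapI_eq {m m' : G.AN} (hN : G.srcNode m = G.srcNode m')
    (hI : p.mapI m = p.mapI m') : m = m' :=
  (p.etale_in (G.srcNode m') (p.mapI m') (p.comm_tI m')).unique ⟨hN, hI⟩ ⟨rfl, rfl⟩

theorem eq_of_tgtNode_eq_of_mapO_eq {o o' : G.NA} (hN : G.tgtNode o = G.tgtNode o')
    (hO : p.mapO o = p.mapO o') : o = o' :=
  (p.etale_out (G.tgtNode o') (p.mapO o') (p.comm_tO o')).unique ⟨hN, hO⟩ ⟨rfl, rfl⟩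

end EtaleMap

namespace GraphMap

variable {G : PNGraph} {P : PetriNet} {p : EtaleMap G P} {f : GraphMap G G}

theorem mapAN_eq_self_of_overP (hf : f.OverP p p) {m : G.AN}
    (hm : f.mapN (G.srcNode m) = G.srcNode m) : f.mapAN m = m :=
  p.eq_of_srcNode_eq_of_mapI_eq (by rw [f.comm_srcNode, hm]) (hf.2.1 m)

theorem mapNA_eq_self_of_overP (hf : f.OverP p p) {o : G.NA}
    (ho : f.mapN (G.tgtNode o) = G.tgtNode o) : f.mapNA o = o :=
  p.eq_of_tgtNode_eq_of_mapO_eq (by rw [f.comm_tgtNode, ho]) (hf.2.2.2 o)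

theorem mapA_eq_self_of_incident (hf : f.OverP p p) {a : G.A} {y : G.N}
    (hy : f.mapN y = y) (ha : G.incident a y) : f.mapA a = a := by
  rcases ha with ⟨m, rfl, rfl⟩ | ⟨o, rfl, rfl⟩
  · rw [← f.comm_srcEdge, mapAN_eq_self_of_overP hf hy]
  · rw [← f.comm_tgtEdge, mapNA_eq_self_of_overP hf hy]

theorem mapN_eq_self_of_incident {a : G.A} {z : G.N} (ha : f.mapA a = a)
    (hz : G.incident a z) : f.mapN z = z := by
  rcases hz with ⟨m, rfl, rfl⟩ | ⟨o, rfl, rfl⟩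
  · have hm : f.mapAN m = m := G.inj_srcEdge (by rw [f.comm_srcEdge, ha])
    rw [← f.comm_srcNode, hm]
  · have ho : f.mapNA o = o := G.inj_tgtEdge (by rw [f.comm_tgtEdge, ha])
    rw [← f.comm_tgtNode, ho]

theorem mapN_eq_self_of_adj (hf : f.OverP p p) {y z : G.N} (hyz : G.adj y z)
    (hy : f.mapN y = y) : f.mapN z = z :=
  let ⟨_, hay, haz⟩ := hyz
  mapN_eq_self_of_incident (mapA_eq_self_of_incident hf hy hay) haz

theorem mapN_eq_self_iff_of_eqvGen (hf : f.OverP p p) {y z : G.N}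
    (hyz : Relation.EqvGen G.adj y z) : f.mapN y = y ↔ f.mapN z = z := by
  induction hyz with
  | rel _ _ h => exact ⟨mapN_eq_self_of_adj hf h, mapN_eq_self_of_adj hf (G.adj_symm h)⟩
  | refl => exact Iff.rfl
  | symm _ _ _ ih => exact ih.symm
  | trans _ _ _ _ _ ih₁ ih₂ => exact ih₁.trans ih₂

end GraphMap

theorem no_infinitesimal_automorphisms_general (P : PetriNet)
    (G : PNGraph) (p : EtaleMap G P)
    (f : GraphMap G G)
    (hover : f.OverP p p)
    (x : G.N) (hx : f.mapN x = x) :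
    (∀ y : G.N, Relation.EqvGen G.adj x y → f.mapN y = y) ∧
    (∀ (a : G.A) (y : G.N), Relation.EqvGen G.adj x y → G.incident a y → f.mapA a = a) := by
  have hfixed : ∀ y, Relation.EqvGen G.adj x y → f.mapN y = y := fun y hy =>
    (GraphMap.mapN_eq_self_iff_of_eqvGen hover hy).mp hx
  exact ⟨hfixed, fun a y hy ha => GraphMap.mapA_eq_self_of_incident hover (hfixed y hy) ha⟩

/-- A `P`-graph has no infinitesimal automorphisms: if an automorphism of a
`P`-graph fixes a node `x`, it is the identity on the whole connected component
of `x` (all nodes connected to `x`, and all edges incident to them). -/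
theorem no_infinitesimal_automorphisms (P : PetriNet)
    (G : PNGraph) (hG : G.Acyclic) (p : EtaleMap G P)
    (f : GraphMap G G)
    (hisoA : Function.Bijective f.mapA) (hisoAN : Function.Bijective f.mapAN)
    (hisoN : Function.Bijective f.mapN) (hisoNA : Function.Bijective f.mapNA)
    (hover : f.OverP p p)
    (x : G.N) (hx : f.mapN x = x) :
    (∀ y : G.N, Relation.EqvGen G.adj x y → f.mapN y = y) ∧
    (∀ (a : G.A) (y : G.N), Relation.EqvGen G.adj x y → G.incident a y → f.mapA a = a) :=
  no_infinitesimal_automorphisms_general P G p f hover x hx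
end

section
/- Let H' → H be an injective etale map of well-founded forward B-hypergraphs (a map inducing a bijection on in-boundaries B, with the pullback conditions of etale maps, and injective in each component). Then for every node y of H', the principal lowerset of y computed in H' coincides with the principal lowerset of y computed in H; in particular, for nodes x, y of H', x ⋖ y holds in H if and only if it holds in H'. -/
/-- An etale map of hypergraphs: componentwise maps commuting with the structure
maps, such that the two middle squares (over nodes) are pullbacks, and (the
`B`-map condition) the rightmost square (over the hyperedge sets, on the `O`
side) is a pullback. -/
structure EtaleBMap (H' H : DirHypergraph) where
  mapA : H'.A → H.A
  mapI : H'.I → H.I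
  mapN : H'.N → H.N
  mapO : H'.O → H.O
  comm_iA : ∀ i, H.iA (mapI i) = mapA (H'.iA i)
  comm_iN : ∀ i, H.iN (mapI i) = mapN (H'.iN i)
  comm_oN : ∀ o, H.oN (mapO o) = mapN (H'.oN o)
  comm_oA : ∀ o, H.oA (mapO o) = mapA (H'.oA o)
  etale_in : ∀ (x : H'.N) (i : H.I), H.iN i = mapN x →
      ∃! i' : H'.I, H'.iN i' = x ∧ mapI i' = i
  etale_out : ∀ (x : H'.N) (o : H.O), H.oN o = mapN x →
      ∃! o' : H'.O, H'.oN o' = x ∧ mapO o' = o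
  bmap : ∀ (a' : H'.A) (o : H.O), H.oA o = mapA a' →
      ∃! o' : H'.O, H'.oA o' = a' ∧ mapO o' = o

/-!
Predecessors lift along an etale `B`-map: a hyperedge entering `f y` lifts, by the pullback
condition on incoming hyperedges, to one entering `y`, and the `B`-map condition lifts the
hyperedge that leaves its source. Chains ending at `f y` therefore lift step by step to chains
ending at `y`, and injectivity on nodes makes the lifted sources the given ones.
-/

namespace EtaleBMap

variable {H' H : DirHypergraph} (f : EtaleBMap H' H)

theorem prec_map {x y : H'.N} (h : H'.prec x y) : H.prec (f.mapN x) (f.mapN y) := by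
  obtain ⟨o, i, ho, hi, ha⟩ := h
  exact ⟨f.mapO o, f.mapI i, by rw [f.comm_oN, ho], by rw [f.comm_iN, hi],
    by rw [f.comm_oA, f.comm_iA, ha]⟩

theorem exists_prec_of_prec_map {z : H.N} {y : H'.N} (h : H.prec z (f.mapN y)) :
    ∃ x, H'.prec x y ∧ f.mapN x = z := by
  obtain ⟨o, i, ho, hi, ha⟩ := h
  obtain ⟨i', ⟨hi'N, hi'map⟩, -⟩ := f.etale_in y i hi
  obtain ⟨o', ⟨ho'A, ho'map⟩, -⟩ := f.bmap (H'.iA i') o (by rw [← f.comm_iA, hi'map, ha])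
  exact ⟨H'.oN o', ⟨o', i', rfl, hi'N, ho'A⟩, by rw [← f.comm_oN, ho'map, ho]⟩

theorem le_map {x y : H'.N} (h : H'.le x y) : H.le (f.mapN x) (f.mapN y) :=
  Relation.ReflTransGen.lift f.mapN (fun _ _ => f.prec_map) _ _ h

theorem exists_le_of_le_map {z : H.N} {y : H'.N} (h : H.le z (f.mapN y)) :
    ∃ x, H'.le x y ∧ f.mapN x = z := by
  induction h using Relation.ReflTransGen.head_induction_on with
  | refl => exact ⟨y, Relation.ReflTransGen.refl, rfl⟩
  | head hzc _ ih =>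
    obtain ⟨c', hc'y, rfl⟩ := ih
    obtain ⟨x, hxc', rfl⟩ := f.exists_prec_of_prec_map hzc
    exact ⟨x, Relation.ReflTransGen.head hxc' hc'y, rfl⟩

variable {f}

theorem prec_map_iff (hinjN : Function.Injective f.mapN) {x y : H'.N} :
    H'.prec x y ↔ H.prec (f.mapN x) (f.mapN y) := by
  refine ⟨f.prec_map, fun h => ?_⟩
  obtain ⟨x', hx'y, hx'⟩ := f.exists_prec_of_prec_map h
  rwa [← hinjN hx']

theorem le_map_iff (hinjN : Function.Injective f.mapN) {x y : H'.N} :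
    H'.le x y ↔ H.le (f.mapN x) (f.mapN y) := by
  refine ⟨f.le_map, fun h => ?_⟩
  obtain ⟨x', hx'y, hx'⟩ := f.exists_le_of_le_map h
  rwa [← hinjN hx']

end EtaleBMap

theorem principal_lowersets_preserved_general (H' H : DirHypergraph)
    (f : EtaleBMap H' H)
    (hinjN : Function.Injective f.mapN) :
    (∀ x y : H'.N, H'.prec x y ↔ H.prec (f.mapN x) (f.mapN y)) ∧
    (∀ x y : H'.N, H'.le x y ↔ H.le (f.mapN x) (f.mapN y)) :=
  ⟨fun _ _ => EtaleBMap.prec_map_iff hinjN, fun _ _ => EtaleBMap.le_map_iff hinjN⟩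

/-- Principal lowersets are preserved by injective etale `B`-maps of well-founded
forward `B`-hypergraphs: for nodes of `H'`, the relations `⋖` and `≤` computed
in `H'` coincide with those computed in `H`; in particular principal lowersets
of `H'` coincide with those of `H`. -/
theorem principal_lowersets_preserved (H' H : DirHypergraph)
    (hfwd' : H'.Forward) (hfwd : H.Forward)
    (hwf' : H'.WellFoundedHgr) (hwf : H.WellFoundedHgr)
    (f : EtaleBMap H' H)
    (hinjA : Function.Injective f.mapA) (hinjI : Function.Injective f.mapI)
    (hinjN : Function.Injective f.mapN) (hinjO : Function.Injective f.mapO)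
    (hbd : Set.BijOn f.mapA H'.inBoundary H.inBoundary) :
    (∀ x y : H'.N, H'.prec x y ↔ H.prec (f.mapN x) (f.mapN y)) ∧
    (∀ x y : H'.N, H'.le x y ↔ H.le (f.mapN x) (f.mapN y)) :=
  principal_lowersets_preserved_general H' H f hinjN
end
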